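/- Let P be a simple thin polyomino with the S-property. Then the rook polynomial satisfies the Charney-Davis inequality: if r(P) is even then (-1)^{r(P)/2} r_P(-1) ≥ 0, and if r(P) is odd then r_P(-1) = 0. -/

import Mathlib

open Polynomial

/-- A cell, identified with its lower-left lattice corner. -/
abbrev Cell := ℤ × ℤ

/-- Two cells are neighbours if they share an edge. -/
def Adj (c d : Cell) : Prop := |c.1 - d.1| + |c.2 - d.2| = 1

/-- `b` is reachable from `a` by a chain of neighbouring cells inside `P`. -/
def ReachIn (P : Finset Cell) (a b : Cell) : Prop :=
  Relation.ReflTransGen (fun x y => x ∈ P ∧ y ∈ P ∧ Adj x y) a b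

def IsConnectedSet (P : Finset Cell) : Prop := ∀ a ∈ P, ∀ b ∈ P, ReachIn P a b

/-- A polyomino: a nonempty finite edge-connected collection of cells. -/
def IsPolyomino (P : Finset Cell) : Prop := P.Nonempty ∧ IsConnectedSet P

/-- Simply connected: the complement of `P` in `ℤ²` is connected. -/
def IsSimple (P : Finset Cell) : Prop :=
  ∀ a b : Cell, a ∉ P → b ∉ P →
    Relation.ReflTransGen (fun x y => x ∉ P ∧ y ∉ P ∧ Adj x y) a b

/-- Thin: no 2×2 square of cells. -/
def IsThin (P : Finset Cell) : Prop :=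
  ¬ ∃ p : Cell, p ∈ P ∧ (p.1 + 1, p.2) ∈ P ∧ (p.1, p.2 + 1) ∈ P ∧ (p.1 + 1, p.2 + 1) ∈ P

def IsHorizInterval (I : Finset Cell) : Prop :=
  ∃ j a b : ℤ, a ≤ b ∧ I = (Finset.Icc a b).image (fun x => ((x, j) : Cell))

def IsVertInterval (I : Finset Cell) : Prop :=
  ∃ i a b : ℤ, a ≤ b ∧ I = (Finset.Icc a b).image (fun y => ((i, y) : Cell))

/-- An inner interval of `P`: a horizontal or vertical strip of cells contained in `P`. -/
def IsInnerInterval (P I : Finset Cell) : Prop :=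
  (IsHorizInterval I ∨ IsVertInterval I) ∧ I ⊆ P

/-- A maximal inner interval of `P`. -/
def IsMaxInterval (P I : Finset Cell) : Prop :=
  IsInnerInterval P I ∧ ∀ I', IsInnerInterval P I' → I ⊆ I' → I' = I

/-- A single cell: a cell belonging to exactly one maximal inner interval. -/
def IsSingleCell (P : Finset Cell) (c : Cell) : Prop :=
  c ∈ P ∧ ∃! I, IsMaxInterval P I ∧ c ∈ I

/-- The S-property: every maximal inner interval has exactly one single cell. -/
def SProperty (P : Finset Cell) : Prop :=
  ∀ I, IsMaxInterval P I → ∃! c, c ∈ I ∧ IsSingleCell P c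

/-- A rook configuration: cells of `P`, pairwise not in a common inner interval. -/
def IsRookConfig (P S : Finset Cell) : Prop :=
  S ⊆ P ∧ ∀ c ∈ S, ∀ d ∈ S, c ≠ d → ¬ ∃ I, IsInnerInterval P I ∧ c ∈ I ∧ d ∈ I

open scoped Classical in
/-- The rook polynomial of `P`. -/
noncomputable def rookPoly (P : Finset Cell) : Polynomial ℤ :=
  ∑ S ∈ P.powerset.filter (fun S => IsRookConfig P S), (X : Polynomial ℤ) ^ S.card

/-- The rook number: the degree of the rook polynomial. -/
noncomputable def rookNumber (P : Finset Cell) : ℕ := (rookPoly P).natDegree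

open scoped Classical in
/-- Generating polynomial of rook configurations of `P` avoiding all cells of `A`. -/
noncomputable def rookPolyAvoid (P A : Finset Cell) : Polynomial ℤ :=
  ∑ S ∈ P.powerset.filter (fun S => IsRookConfig P S ∧ Disjoint S A),
    (X : Polynomial ℤ) ^ S.card

open scoped Classical in
/-- An end-cell of an interval: it has exactly one neighbour inside the interval. -/
noncomputable def IsEndCell (I : Finset Cell) (c : Cell) : Prop :=
  c ∈ I ∧ (I.filter (fun d => Adj c d)).card = 1

/-- A collapse datum `(I, J, P^I)` on a polyomino `P`. -/
def IsCollapseDatum (P I J PI : Finset Cell) : Prop :=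
  IsMaxInterval P I ∧ IsMaxInterval P J ∧
  (∃ c, I ∩ J = {c}) ∧
  (∀ J', IsMaxInterval P J' → (∃ c, I ∩ J' = {c}) → J' = J) ∧
  PI ⊆ J ∧ ¬ (I ∩ J ⊆ PI) ∧ IsConnectedSet PI ∧
  (P \ (I ∪ PI)).Nonempty ∧ IsConnectedSet (P \ (I ∪ PI))

/-- The second end-cell of `J` in a collapse datum: the end-cell of `J` other than
the first end-cell (which is `I ∩ J` if `P^I = ∅`, and the cell of `P^I` otherwise). -/
noncomputable def IsSecondEndCell (I J PI : Finset Cell) (c : Cell) : Prop :=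
  IsEndCell J c ∧ ((PI = ∅ ∧ c ∉ I) ∨ (PI ≠ ∅ ∧ c ∉ PI))

open scoped Classical in
/-- The neighbours of a cell `c` inside `P`. -/
noncomputable def nbrs (P : Finset Cell) (c : Cell) : Finset Cell :=
  P.filter (fun d => Adj c d)

open scoped Classical in
/-- The connected component of `x` in `S`. -/
noncomputable def componentOf (S : Finset Cell) (x : Cell) : Finset Cell :=
  S.filter (fun y => ReachIn S x y)

/-- A path of cells in `P` from `c` to `d`: pairwise distinct, consecutive neighbours. -/
def IsCellPath (P : Finset Cell) (l : List Cell) (c d : Cell) : Prop :=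
  l ≠ [] ∧ l.head? = some c ∧ l.getLast? = some d ∧ l.Nodup ∧
    (∀ x ∈ l, x ∈ P) ∧ l.Chain' Adj


section CharneyDavisProof
open scoped Classical

-- singleton is a horizontal interval
lemma horiz_singleton (c : Cell) : IsHorizInterval {c} := by
  refine ⟨c.2, c.1, c.1, le_refl _, ?_⟩
  simp

lemma inner_singleton {P : Finset Cell} {c : Cell} (hc : c ∈ P) :
    IsInnerInterval P {c} := ⟨Or.inl (horiz_singleton c), by simpa using hc⟩

-- every inner interval extends to a maximal one
lemma exists_max_ext {P I0 : Finset Cell} (h : IsInnerInterval P I0) :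
    ∃ I, IsMaxInterval P I ∧ I0 ⊆ I := by
  classical
  set s := P.powerset.filter (fun I => IsInnerInterval P I ∧ I0 ⊆ I) with hs
  have hI0 : I0 ∈ s := by
    simp only [hs, Finset.mem_filter, Finset.mem_powerset]
    exact ⟨h.2, h, le_refl _⟩
  obtain ⟨I, hIs, hmax⟩ := s.exists_max_image (fun I => I.card) ⟨I0, hI0⟩
  simp only [hs, Finset.mem_filter, Finset.mem_powerset] at hIs
  refine ⟨I, ⟨hIs.2.1, ?_⟩, hIs.2.2⟩
  intro I' hI' hsub
  have hI's : I' ∈ s := by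
    simp only [hs, Finset.mem_filter, Finset.mem_powerset]
    exact ⟨hI'.2, hI', hIs.2.2.trans hsub⟩
  exact (Finset.eq_of_subset_of_card_le hsub (hmax I' hI's)).symm

-- union of two horizontal intervals sharing a cell
lemma horiz_union {I J : Finset Cell} {c : Cell} (hI : IsHorizInterval I)
    (hJ : IsHorizInterval J) (hcI : c ∈ I) (hcJ : c ∈ J) :
    IsHorizInterval (I ∪ J) := by
  obtain ⟨j, a, b, hab, rfl⟩ := hI
  obtain ⟨j', a', b', hab', rfl⟩ := hJ
  simp only [Finset.mem_image, Finset.mem_Icc] at hcI hcJ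
  obtain ⟨x, hx, hxc⟩ := hcI
  obtain ⟨x', hx', hxc'⟩ := hcJ
  have hj : j = j' := by rw [← hxc'] at hxc; exact (congrArg Prod.snd hxc)
  subst hj
  refine ⟨j, min a a', max b b', ?_, ?_⟩
  · exact le_trans (le_trans (min_le_left _ _) hx.1) (le_trans hx.2 (le_max_left _ _))
  · have hcc : x' = x := by rw [← hxc'] at hxc; exact (congrArg Prod.fst hxc).symm
    subst hcc
    rw [← Finset.image_union]
    congr 1
    ext y
    simp only [Finset.mem_union, Finset.mem_Icc]
    omega

lemma vert_union {I J : Finset Cell} {c : Cell} (hI : IsVertInterval I)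
    (hJ : IsVertInterval J) (hcI : c ∈ I) (hcJ : c ∈ J) :
    IsVertInterval (I ∪ J) := by
  obtain ⟨i, a, b, hab, rfl⟩ := hI
  obtain ⟨i', a', b', hab', rfl⟩ := hJ
  simp only [Finset.mem_image, Finset.mem_Icc] at hcI hcJ
  obtain ⟨x, hx, hxc⟩ := hcI
  obtain ⟨x', hx', hxc'⟩ := hcJ
  have hj : i = i' := by rw [← hxc'] at hxc; exact (congrArg Prod.fst hxc)
  subst hj
  refine ⟨i, min a a', max b b', ?_, ?_⟩
  · exact le_trans (le_trans (min_le_left _ _) hx.1) (le_trans hx.2 (le_max_left _ _))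
  · have hcc : x' = x := by rw [← hxc'] at hxc; exact (congrArg Prod.snd hxc).symm
    subst hcc
    rw [← Finset.image_union]
    congr 1
    ext y
    simp only [Finset.mem_union, Finset.mem_Icc]
    omega


/-- The finset of maximal inner intervals. -/
noncomputable def maxInts (P : Finset Cell) : Finset (Finset Cell) :=
  P.powerset.filter (fun I => IsMaxInterval P I)

lemma mem_maxInts {P I : Finset Cell} : I ∈ maxInts P ↔ IsMaxInterval P I := by
  simp only [maxInts, Finset.mem_filter, Finset.mem_powerset]
  exact ⟨fun h => h.2, fun h => ⟨h.1.2, h⟩⟩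

/-- The maximal intervals containing a cell. -/
noncomputable def intsOf (P : Finset Cell) (c : Cell) : Finset (Finset Cell) :=
  (maxInts P).filter (fun I => c ∈ I)

lemma mem_intsOf {P I : Finset Cell} {c : Cell} :
    I ∈ intsOf P c ↔ IsMaxInterval P I ∧ c ∈ I := by
  simp [intsOf, mem_maxInts]

lemma max_horiz_unique {P I J : Finset Cell} {c : Cell} (hI : IsMaxInterval P I)
    (hJ : IsMaxInterval P J) (hIh : IsHorizInterval I) (hJh : IsHorizInterval J)
    (hcI : c ∈ I) (hcJ : c ∈ J) : I = J := by
  have hu : IsInnerInterval P (I ∪ J) :=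
    ⟨Or.inl (horiz_union hIh hJh hcI hcJ), Finset.union_subset hI.1.2 hJ.1.2⟩
  have h1 := hI.2 _ hu Finset.subset_union_left
  have h2 := hJ.2 _ hu Finset.subset_union_right
  rw [← h1, ← h2]
  simp

lemma max_vert_unique {P I J : Finset Cell} {c : Cell} (hI : IsMaxInterval P I)
    (hJ : IsMaxInterval P J) (hIh : IsVertInterval I) (hJh : IsVertInterval J)
    (hcI : c ∈ I) (hcJ : c ∈ J) : I = J := by
  have hu : IsInnerInterval P (I ∪ J) :=
    ⟨Or.inr (vert_union hIh hJh hcI hcJ), Finset.union_subset hI.1.2 hJ.1.2⟩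
  have h1 := hI.2 _ hu Finset.subset_union_left
  have h2 := hJ.2 _ hu Finset.subset_union_right
  rw [← h1, ← h2]
  simp

lemma intsOf_card_le_two (P : Finset Cell) (c : Cell) : (intsOf P c).card ≤ 2 := by
  by_contra h
  push_neg at h
  obtain ⟨I, hI, J, hJ, K, hK, hIJ, hIK, hJK⟩ := Finset.two_lt_card.mp h
  rw [mem_intsOf] at hI hJ hK
  -- among three, two share orientation
  have horv : ∀ {L : Finset Cell}, IsMaxInterval P L → IsHorizInterval L ∨ IsVertInterval L :=
    fun hL => hL.1.1
  rcases horv hI.1 with h1 | h1 <;> rcases horv hJ.1 with h2 | h2 <;>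
    rcases horv hK.1 with h3 | h3
  · exact hIJ (max_horiz_unique hI.1 hJ.1 h1 h2 hI.2 hJ.2)
  · exact hIJ (max_horiz_unique hI.1 hJ.1 h1 h2 hI.2 hJ.2)
  · exact hIK (max_horiz_unique hI.1 hK.1 h1 h3 hI.2 hK.2)
  · exact hJK (max_vert_unique hJ.1 hK.1 h2 h3 hJ.2 hK.2)
  · exact hJK (max_horiz_unique hJ.1 hK.1 h2 h3 hJ.2 hK.2)
  · exact hIK (max_vert_unique hI.1 hK.1 h1 h3 hI.2 hK.2)
  · exact hIJ (max_vert_unique hI.1 hJ.1 h1 h2 hI.2 hJ.2)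
  · exact hIJ (max_vert_unique hI.1 hJ.1 h1 h2 hI.2 hJ.2)

lemma intsOf_nonempty {P : Finset Cell} {c : Cell} (hc : c ∈ P) :
    (intsOf P c).Nonempty := by
  obtain ⟨I, hI, hsub⟩ := exists_max_ext (inner_singleton hc)
  exact ⟨I, mem_intsOf.mpr ⟨hI, hsub (Finset.mem_singleton_self c)⟩⟩

lemma intsOf_card_pos {P : Finset Cell} {c : Cell} (hc : c ∈ P) :
    1 ≤ (intsOf P c).card := Finset.card_pos.mpr (intsOf_nonempty hc)


/-- attack relation -/
def Attacks (P : Finset Cell) (c d : Cell) : Prop :=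
  ∃ I, IsInnerInterval P I ∧ c ∈ I ∧ d ∈ I

lemma attacks_iff {P : Finset Cell} {c d : Cell} :
    Attacks P c d ↔ ∃ I ∈ intsOf P c, d ∈ I := by
  constructor
  · rintro ⟨I0, hI0, hc, hd⟩
    obtain ⟨I, hI, hsub⟩ := exists_max_ext hI0
    exact ⟨I, mem_intsOf.mpr ⟨hI, hsub hc⟩, hsub hd⟩
  · rintro ⟨I, hI, hd⟩
    rw [mem_intsOf] at hI
    exact ⟨I, hI.1.1, hI.2, hd⟩

noncomputable def single (P : Finset Cell) (c : Cell) : Prop := (intsOf P c).card = 1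
noncomputable def corner (P : Finset Cell) (c : Cell) : Prop := (intsOf P c).card = 2

lemma single_or_corner {P : Finset Cell} {c : Cell} (hc : c ∈ P) :
    single P c ∨ corner P c := by
  have h1 := intsOf_card_pos hc
  have h2 := intsOf_card_le_two P c
  unfold single corner
  omega

lemma single_isSingleCell {P : Finset Cell} {c : Cell} (hc : c ∈ P) (h : single P c) :
    IsSingleCell P c := by
  obtain ⟨I, hI⟩ := Finset.card_eq_one.mp h
  have hIc := mem_intsOf.mp (hI ▸ Finset.mem_singleton_self I)
  refine ⟨hc, I, hIc, ?_⟩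
  intro J hJ
  have : J ∈ intsOf P c := mem_intsOf.mpr hJ
  rw [hI, Finset.mem_singleton] at this
  exact this

lemma isSingleCell_single {P : Finset Cell} {c : Cell} (h : IsSingleCell P c) :
    single P c := by
  obtain ⟨hc, I, hI, huniq⟩ := h
  rw [single, Finset.card_eq_one]
  refine ⟨I, ?_⟩
  ext J
  rw [mem_intsOf, Finset.mem_singleton]
  exact ⟨fun hJ => huniq J hJ, fun hJ => hJ ▸ hI⟩

/-- the unique maximal interval of a single cell -/
noncomputable def theInt (P : Finset Cell) (c : Cell) : Finset Cell :=
  if h : (intsOf P c).Nonempty then h.choose else ∅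

lemma theInt_mem {P : Finset Cell} {c : Cell} (hc : c ∈ P) :
    theInt P c ∈ intsOf P c := by
  rw [theInt, dif_pos (Finset.card_pos.mp (intsOf_card_pos hc))]
  exact (Finset.card_pos.mp (intsOf_card_pos hc)).choose_spec

lemma single_intsOf_eq {P : Finset Cell} {c : Cell} (hc : c ∈ P) (h : single P c) :
    intsOf P c = {theInt P c} := by
  obtain ⟨I, hI⟩ := Finset.card_eq_one.mp h
  rw [hI]
  congr 1
  have := theInt_mem hc
  rw [hI, Finset.mem_singleton] at this
  exact this.symm

/-- distinct single cells never attack each other (uses the S-property) -/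
lemma singles_no_attack {P : Finset Cell} (hS : SProperty P) {c d : Cell}
    (hcP : c ∈ P) (hdP : d ∈ P) (hc : single P c) (hd : single P d)
    (hat : Attacks P c d) : c = d := by
  obtain ⟨I, hI, hdI⟩ := attacks_iff.mp hat
  have hcI := (mem_intsOf.mp hI).2
  have hImax := (mem_intsOf.mp hI).1
  -- d's unique interval is I too
  have hdints : I ∈ intsOf P d := mem_intsOf.mpr ⟨hImax, hdI⟩
  obtain ⟨e, _, huniq⟩ := hS I hImax
  have h1 := huniq c ⟨hcI, single_isSingleCell hcP hc⟩
  have h2 := huniq d ⟨hdI, single_isSingleCell hdP hd⟩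
  rw [h1, h2]

lemma theInt_single_mem {P : Finset Cell} {c : Cell} (hc : c ∈ P) :
    IsMaxInterval P (theInt P c) ∧ c ∈ theInt P c := mem_intsOf.mp (theInt_mem hc)

/-- singles of P -/
noncomputable def singles (P : Finset Cell) : Finset Cell :=
  P.filter (fun c => single P c)

lemma singles_card {P : Finset Cell} (hS : SProperty P) :
    (singles P).card = (maxInts P).card := by
  apply Finset.card_bij (fun c _ => theInt P c)
  · intro a ha
    rw [singles, Finset.mem_filter] at ha
    exact mem_maxInts.mpr (theInt_single_mem ha.1).1
  · intro a ha b hb hab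
    rw [singles, Finset.mem_filter] at ha hb
    apply singles_no_attack hS ha.1 hb.1 ha.2 hb.2
    refine ⟨theInt P a, (theInt_single_mem ha.1).1.1, (theInt_single_mem ha.1).2, ?_⟩
    rw [hab]; exact (theInt_single_mem hb.1).2
  · intro I hI
    rw [mem_maxInts] at hI
    obtain ⟨c, ⟨hcI, hcs⟩, _⟩ := hS I hI
    have hcP : c ∈ P := hcs.1
    have hcsingle : single P c := isSingleCell_single hcs
    refine ⟨c, by rw [singles, Finset.mem_filter]; exact ⟨hcP, hcsingle⟩, ?_⟩
    -- theInt P c = I since both are in intsOf c which is a singleton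
    have h1 := theInt_mem hcP
    have h2 : I ∈ intsOf P c := mem_intsOf.mpr ⟨hI, hcI⟩
    rw [single_intsOf_eq hcP hcsingle, Finset.mem_singleton] at h2
    exact h2.symm


lemma attacks_symm {P : Finset Cell} {c d : Cell} (h : Attacks P c d) : Attacks P d c := by
  obtain ⟨I, h1, h2, h3⟩ := h; exact ⟨I, h1, h3, h2⟩

lemma single_not_corner {P : Finset Cell} {c : Cell} (h : single P c) : ¬ corner P c := by
  unfold single corner at *; omega

/-- rook configs -/
noncomputable def configs (P : Finset Cell) : Finset (Finset Cell) :=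
  P.powerset.filter (fun S => IsRookConfig P S)

lemma mem_configs {P S : Finset Cell} : S ∈ configs P ↔ IsRookConfig P S := by
  simp only [configs, Finset.mem_filter, Finset.mem_powerset]
  exact ⟨fun h => h.2, fun h => ⟨h.1, h⟩⟩

lemma rook_no_attack {P S : Finset Cell} (h : IsRookConfig P S) {c d : Cell}
    (hc : c ∈ S) (hd : d ∈ S) (hne : c ≠ d) : ¬ Attacks P c d := h.2 c hc d hd hne

/-- corner matchings -/
noncomputable def cornerMatchings (P : Finset Cell) : Finset (Finset Cell) :=
  (configs P).filter (fun M => ∀ c ∈ M, corner P c)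

lemma mem_cornerMatchings {P M : Finset Cell} :
    M ∈ cornerMatchings P ↔ IsRookConfig P M ∧ ∀ c ∈ M, corner P c := by
  simp [cornerMatchings, Finset.mem_filter, mem_configs]

/-- intervals covered by a matching -/
noncomputable def covered (P M : Finset Cell) : Finset (Finset Cell) :=
  M.biUnion (fun m => intsOf P m)

lemma covered_subset {P M : Finset Cell} : covered P M ⊆ maxInts P := by
  intro I hI
  rw [covered, Finset.mem_biUnion] at hI
  obtain ⟨m, _, hm⟩ := hI
  exact (Finset.mem_filter.mp hm).1

lemma covered_card {P M : Finset Cell} (hM : M ∈ cornerMatchings P) :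
    (covered P M).card = 2 * M.card := by
  rw [mem_cornerMatchings] at hM
  rw [covered, Finset.card_biUnion]
  · rw [Finset.sum_congr rfl (fun m hm => hM.2 m hm), Finset.sum_const, smul_eq_mul,
      mul_comm]
  · intro m1 h1 m2 h2 hne
    rw [Function.onFun, Finset.disjoint_left]
    intro I hI1 hI2
    rw [mem_intsOf] at hI1 hI2
    exact rook_no_attack hM.1 h1 h2 hne ⟨I, hI1.1.1, hI1.2, hI2.2⟩

/-- the single cells still available after placing a matching -/
noncomputable def avail (P M : Finset Cell) : Finset Cell :=
  (singles P).filter (fun s => theInt P s ∉ covered P M)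

lemma mem_avail {P M : Finset Cell} {s : Cell} :
    s ∈ avail P M ↔ s ∈ P ∧ single P s ∧ theInt P s ∉ covered P M := by
  simp only [avail, singles, Finset.mem_filter]
  tauto

lemma avail_card {P M : Finset Cell} (hS : SProperty P) (hM : M ∈ cornerMatchings P) :
    (avail P M).card = (maxInts P).card - 2 * M.card := by
  have key : (avail P M).card = ((maxInts P) \ covered P M).card := by
    apply Finset.card_bij (fun c _ => theInt P c)
    · intro a ha
      rw [mem_avail] at ha
      exact Finset.mem_sdiff.mpr ⟨mem_maxInts.mpr (theInt_single_mem ha.1).1, ha.2.2⟩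
    · intro a ha b hb hab
      rw [mem_avail] at ha hb
      apply singles_no_attack hS ha.1 hb.1 ha.2.1 hb.2.1
      refine ⟨theInt P a, (theInt_single_mem ha.1).1.1, (theInt_single_mem ha.1).2, ?_⟩
      rw [hab]; exact (theInt_single_mem hb.1).2
    · intro I hI
      rw [Finset.mem_sdiff, mem_maxInts] at hI
      obtain ⟨c, ⟨hcI, hcs⟩, _⟩ := hS I hI.1
      have hcP : c ∈ P := hcs.1
      have hcsingle : single P c := isSingleCell_single hcs
      have hthe : theInt P c = I := by
        have h2 : I ∈ intsOf P c := mem_intsOf.mpr ⟨hI.1, hcI⟩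
        rw [single_intsOf_eq hcP hcsingle, Finset.mem_singleton] at h2
        exact h2.symm
      exact ⟨c, mem_avail.mpr ⟨hcP, hcsingle, hthe ▸ hI.2⟩, hthe⟩
  rw [key, Finset.card_sdiff_of_subset covered_subset, covered_card hM]

lemma two_mul_card_le {P M : Finset Cell} (hM : M ∈ cornerMatchings P) :
    2 * M.card ≤ (maxInts P).card := by
  rw [← covered_card hM]
  exact Finset.card_le_card covered_subset

/-- the corner part of a rook config is a corner matching -/
lemma cornerPart_mem {P S : Finset Cell} (hs : S ∈ configs P) :
    S.filter (fun c => corner P c) ∈ cornerMatchings P := by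
  rw [mem_configs] at hs
  rw [mem_cornerMatchings]
  refine ⟨⟨(Finset.filter_subset _ _).trans hs.1, ?_⟩, ?_⟩
  · intro c hc d hd hne
    exact hs.2 c (Finset.filter_subset _ _ hc) d (Finset.filter_subset _ _ hd) hne
  · intro c hc
    exact (Finset.mem_filter.mp hc).2

/-- fiber description: configs with corner part M ↔ subsets of avail M -/
lemma fiber_eq {P M : Finset Cell} (hS : SProperty P) (hM : M ∈ cornerMatchings P) :
    ((configs P).filter (fun S => S.filter (fun c => corner P c) = M)) =
      (avail P M).powerset.image (fun F => M ∪ F) := by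
  have hMrook := (mem_cornerMatchings.mp hM).1
  have hMcor := (mem_cornerMatchings.mp hM).2
  ext S
  simp only [Finset.mem_filter, Finset.mem_image, Finset.mem_powerset]
  constructor
  · rintro ⟨hSc, hfil⟩
    rw [mem_configs] at hSc
    refine ⟨S.filter (fun c => single P c), ?_, ?_⟩
    · -- singles of S are available
      intro s hsmem
      rw [Finset.mem_filter] at hsmem
      have hsP : s ∈ P := hSc.1 hsmem.1
      rw [mem_avail]
      refine ⟨hsP, hsmem.2, ?_⟩
      intro hcov
      rw [covered, Finset.mem_biUnion] at hcov
      obtain ⟨m, hmM, hmint⟩ := hcov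
      have hmS : m ∈ S := by
        rw [← hfil] at hmM; exact (Finset.mem_filter.mp hmM).1
      have hmcor : corner P m := hMcor m hmM
      have hne : s ≠ m := by
        rintro rfl
        exact single_not_corner hsmem.2 hmcor
      apply rook_no_attack hSc hsmem.1 hmS hne
      rw [mem_intsOf] at hmint
      exact ⟨theInt P s, (theInt_single_mem hsP).1.1, (theInt_single_mem hsP).2, hmint.2⟩
    · -- S = M ∪ singles(S)
      rw [← hfil]
      ext c
      simp only [Finset.mem_union, Finset.mem_filter]
      constructor
      · rintro (⟨hc, _⟩ | ⟨hc, _⟩) <;> exact hc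
      · intro hc
        rcases single_or_corner (hSc.1 hc) with h | h
        · exact Or.inr ⟨hc, h⟩
        · exact Or.inl ⟨hc, h⟩
  · rintro ⟨F, hF, rfl⟩
    have hdisj : Disjoint M F := by
      rw [Finset.disjoint_left]
      intro c hcM hcF
      exact single_not_corner (mem_avail.mp (hF hcF)).2.1 (hMcor c hcM)
    have hrook : IsRookConfig P (M ∪ F) := by
      refine ⟨Finset.union_subset hMrook.1 (fun c hc => (mem_avail.mp (hF hc)).1), ?_⟩
      intro c hc d hd hne hat
      rw [Finset.mem_union] at hc hd
      have key : ∀ x y : Cell, x ∈ M → y ∈ F → x ≠ y → ¬ Attacks P x y := by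
        intro x y hx hy hxy hat'
        have hyav := mem_avail.mp (hF hy)
        obtain ⟨I, hI, hxI⟩ := attacks_iff.mp (attacks_symm hat')
        have : I = theInt P y := by
          have := single_intsOf_eq hyav.1 hyav.2.1 ▸ hI
          rwa [Finset.mem_singleton] at this
        subst this
        apply hyav.2.2
        rw [covered, Finset.mem_biUnion]
        exact ⟨x, hx, mem_intsOf.mpr ⟨(mem_intsOf.mp hI).1, hxI⟩⟩
      rcases hc with hc | hc <;> rcases hd with hd | hd
      · exact rook_no_attack hMrook hc hd hne hat
      · exact key c d hc hd hne hat
      · exact key d c hd hc hne.symm (attacks_symm hat)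
      · exact absurd (singles_no_attack hS (mem_avail.mp (hF hc)).1
          (mem_avail.mp (hF hd)).1 (mem_avail.mp (hF hc)).2.1
          (mem_avail.mp (hF hd)).2.1 hat) hne
    refine ⟨mem_configs.mpr hrook, ?_⟩
    -- filter corner of M ∪ F = M
    rw [Finset.filter_union]
    have h1 : M.filter (fun c => corner P c) = M :=
      Finset.filter_eq_self.mpr (fun c hc => hMcor c hc)
    have h2 : F.filter (fun c => corner P c) = ∅ := by
      rw [Finset.filter_eq_empty_iff]
      intro c hc
      exact single_not_corner (mem_avail.mp (hF hc)).2.1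
    rw [h1, h2, Finset.union_empty]


lemma sum_pow_card (A : Finset Cell) :
    ∑ F ∈ A.powerset, (X : Polynomial ℤ) ^ F.card = (X + 1) ^ A.card := by
  have h := Finset.prod_add (fun _ : Cell => (X : Polynomial ℤ)) (fun _ => 1) A
  rw [Finset.prod_const] at h
  rw [h]
  apply Finset.sum_congr rfl
  intro F hF
  rw [Finset.prod_const, Finset.prod_const, one_pow, mul_one]

lemma empty_mem_cornerMatchings (P : Finset Cell) : ∅ ∈ cornerMatchings P := by
  rw [mem_cornerMatchings]
  exact ⟨⟨Finset.empty_subset _, by simp⟩, by simp⟩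

lemma rookPoly_eq_sum (P : Finset Cell) (hS : SProperty P) :
    rookPoly P = ∑ M ∈ cornerMatchings P,
      (X : Polynomial ℤ) ^ M.card * (X + 1) ^ ((maxInts P).card - 2 * M.card) := by
  have h0 : rookPoly P = ∑ S ∈ configs P, (X : Polynomial ℤ) ^ S.card := by
    rw [rookPoly, configs]
  rw [h0, ← Finset.sum_fiberwise_of_maps_to (g := fun S => S.filter (fun c => corner P c))
    (fun S hs => cornerPart_mem hs)]
  apply Finset.sum_congr rfl
  intro M hM
  rw [fiber_eq hS hM]
  rw [Finset.sum_image]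
  · have hdisj : ∀ F ∈ (avail P M).powerset, Disjoint M F := by
      intro F hF
      rw [Finset.mem_powerset] at hF
      rw [Finset.disjoint_left]
      intro c hcM hcF
      have hMcor := (mem_cornerMatchings.mp hM).2 c hcM
      exact single_not_corner (mem_avail.mp (hF hcF)).2.1 hMcor
    rw [← avail_card hS hM, ← sum_pow_card, Finset.mul_sum]
    apply Finset.sum_congr rfl
    intro F hF
    rw [Finset.card_union_of_disjoint (hdisj F hF), pow_add]
  · intro F1 h1 F2 h2 heq
    have hd : ∀ F ∈ (avail P M).powerset, Disjoint M F := by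
      intro F hF
      rw [Finset.mem_powerset] at hF
      rw [Finset.disjoint_left]
      intro c hcM hcF
      exact single_not_corner (mem_avail.mp (hF hcF)).2.1
        ((mem_cornerMatchings.mp hM).2 c hcM)
    have e1 := Finset.union_sdiff_cancel_left (hd F1 h1)
    have e2 := Finset.union_sdiff_cancel_left (hd F2 h2)
    rw [← e1, ← e2, show M ∪ F1 = M ∪ F2 from heq]

lemma term_natDegree {n k : ℕ} (h : 2 * k ≤ n) :
    ((X : Polynomial ℤ) ^ k * (X + 1) ^ (n - 2 * k)).natDegree = n - k := by
  have hX : ((X : Polynomial ℤ) ^ k) ≠ 0 := pow_ne_zero _ X_ne_zero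
  have hm : ((X : Polynomial ℤ) + 1).Monic := by
    simpa using monic_X_add_C (1 : ℤ)
  have h1 : (((X : Polynomial ℤ) + 1) ^ (n - 2 * k)) ≠ 0 := (hm.pow _).ne_zero
  rw [natDegree_mul hX h1, natDegree_pow, natDegree_pow, natDegree_X]
  have : ((X : Polynomial ℤ) + 1).natDegree = 1 := by
    simpa using natDegree_X_add_C (1 : ℤ)
  rw [this]
  omega

lemma rookNumber_eq (P : Finset Cell) (hS : SProperty P) :
    rookNumber P = (maxInts P).card := by
  set n := (maxInts P).card with hn
  have hsum := rookPoly_eq_sum P hS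
  have hcoeff : (rookPoly P).coeff n = 1 := by
    rw [hsum, finset_sum_coeff]
    rw [Finset.sum_eq_single_of_mem ∅ (empty_mem_cornerMatchings P)]
    · simp only [Finset.card_empty, pow_zero, one_mul, Nat.mul_zero, Nat.sub_zero]
      have hm : (((X : Polynomial ℤ) + 1) ^ n).Monic := by
        apply Monic.pow
        simpa using monic_X_add_C (1 : ℤ)
      have hdeg : (((X : Polynomial ℤ) + 1) ^ n).natDegree = n := by
        rw [natDegree_pow]
        have : ((X : Polynomial ℤ) + 1).natDegree = 1 := by
          simpa using natDegree_X_add_C (1 : ℤ)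
        rw [this, mul_one]
      rw [← hdeg]
      exact hm.coeff_natDegree
    · intro M hM hne
      apply coeff_eq_zero_of_natDegree_lt
      rw [term_natDegree (two_mul_card_le hM)]
      have hcard : 1 ≤ M.card := Finset.card_pos.mpr (Finset.nonempty_of_ne_empty hne)
      have := two_mul_card_le hM
      omega
  have hle : (rookPoly P).natDegree ≤ n := by
    rw [hsum]
    apply Polynomial.natDegree_sum_le_of_forall_le
    intro M hM
    rw [term_natDegree (two_mul_card_le hM)]
    omega
  have hge : n ≤ (rookPoly P).natDegree := le_natDegree_of_ne_zero (by rw [hcoeff]; norm_num)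
  rw [rookNumber]
  omega

lemma eval_eq (P : Finset Cell) (hS : SProperty P) :
    (rookPoly P).eval (-1) = ∑ M ∈ cornerMatchings P,
      (-1 : ℤ) ^ M.card * 0 ^ ((maxInts P).card - 2 * M.card) := by
  rw [rookPoly_eq_sum P hS, eval_finset_sum]
  apply Finset.sum_congr rfl
  intro M hM
  simp

theorem charney_davis_core (P : Finset Cell) (hS : SProperty P) :
    (Even (rookNumber P) →
      0 ≤ (-1 : ℤ) ^ (rookNumber P / 2) * (rookPoly P).eval (-1)) ∧
    (Odd (rookNumber P) → (rookPoly P).eval (-1) = 0) := by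
  rw [rookNumber_eq P hS, eval_eq P hS]
  set n := (maxInts P).card with hn
  constructor
  · intro heven
    rw [Finset.mul_sum]
    apply Finset.sum_nonneg
    intro M hM
    have hle := two_mul_card_le hM
    by_cases hc : 2 * M.card = n
    · have : n - 2 * M.card = 0 := by omega
      rw [this, pow_zero, mul_one, ← pow_add]
      have : n / 2 + M.card = n := by omega
      rw [this]
      simp [Even.neg_one_pow heven]
    · have : n - 2 * M.card ≠ 0 := by omega
      rw [zero_pow this]
      simp
  · intro hodd
    apply Finset.sum_eq_zero
    intro M hM
    have hle := two_mul_card_le hM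
    have : n - 2 * M.card ≠ 0 := by
      rcases hodd with ⟨k, hk⟩
      omega
    rw [zero_pow this]
    simp

end CharneyDavisProof

/-- The rook polynomial of a simple thin polyomino with the S-property satisfies the
Charney-Davis inequality. -/
theorem rookPoly_charney_davis (P : Finset Cell) (hP : IsPolyomino P) (hs : IsSimple P)
    (ht : IsThin P) (hS : SProperty P) :
    (Even (rookNumber P) →
      0 ≤ (-1 : ℤ) ^ (rookNumber P / 2) * (rookPoly P).eval (-1)) ∧
    (Odd (rookNumber P) → (rookPoly P).eval (-1) = 0) := charney_davis_core P hS
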